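/- arXiv:1312.7738 — 3 statements merged into one kernel-verified Lean document; each statement's English description precedes it below -/
import Mathlib

section
/- Let 𝓚 be a complex Hilbert space, J a fundamental symmetry on 𝓚, and B the associated Krein inner product. Let H : 𝓚 → 𝓚 be a continuous linear operator and for t ∈ ℝ let U(t) := exp(−(i t) • H) be the operator exponential. Then time evolution is Krein-unitary, i.e. B(U(t) φ, U(t) ψ) = B(φ, ψ) for all t ∈ ℝ and all φ, ψ ∈ 𝓚, if and only if H is J-Hermitian, i.e. H^♯ = H. -/
/-!
Both sides are operator identities. Krein-unitarity of `U(t)` says `U(t)† J U(t) = J`, and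
`U(t)† = exp((i t) • H†)`, so it reads `exp(-(t • b)) J exp(t • a) = J` with `a = -i H`,
`b = -i H†`. In a Banach algebra this holds for all real `t` iff `J a = b J`: differentiating at
`t = 0` gives one direction, and `J a = b J` intertwines the exponentials for the other. Since
`J² = 1`, `J H = H† J` is exactly `J H† J = H`.
-/

open InnerProductSpace ContinuousLinearMap NormedSpace

local notation "⟪" x ", " y "⟫" => @inner ℂ _ _ x y

theorem HasDerivAt.comp_ofReal' {F : Type*} [NormedAddCommGroup F] [NormedSpace ℂ F]
    {f : ℂ → F} {f' : F} {x : ℝ} (hf : HasDerivAt f f' x) :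
    HasDerivAt (fun t : ℝ => f t) f' x := by
  simpa [Function.comp_def] using hf.scomp x Complex.ofRealCLM.hasDerivAt

section BanachAlgebra

variable {𝔸 : Type*} [NormedRing 𝔸] [NormedAlgebra ℂ 𝔸] [CompleteSpace 𝔸]

theorem hasDerivAt_exp_neg_smul_mul_mul_exp_smul (j a b : 𝔸) :
    HasDerivAt (fun z : ℂ => exp (-(z • b)) * j * exp (z • a)) (-b * j + j * a) 0 := by
  have hb := hasDerivAt_exp_smul_const (-b) (0 : ℂ)
  simp only [smul_neg] at hb
  simpa [Pi.mul_def] using (hb.mul_const j).mul (hasDerivAt_exp_smul_const a 0)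

theorem semiconjBy_iff_forall_exp_neg_smul_mul_mul_exp_smul_eq {j a b : 𝔸} :
    SemiconjBy j a b ↔ ∀ t : ℝ, exp (-((t : ℂ) • b)) * j * exp ((t : ℂ) • a) = j := by
  let : NormedAlgebra ℚ 𝔸 := .restrictScalars ℚ ℂ 𝔸
  refine ⟨fun h t => (h.smul_right (t : ℂ)).exp_neg_mul_mul_exp_eq_self, fun h => ?_⟩
  have hderiv := (hasDerivAt_exp_neg_smul_mul_mul_exp_smul j a b).comp_ofReal' (x := 0)
  rw [funext h] at hderiv
  have hzero : -b * j + j * a = 0 := hderiv.unique (hasDerivAt_const _ j)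
  rw [neg_mul, neg_add_eq_zero] at hzero
  exact hzero.symm

end BanachAlgebra

namespace ContinuousLinearMap

variable {E : Type*} [NormedAddCommGroup E] [InnerProductSpace ℂ E] [CompleteSpace E]

theorem adjoint_exp (A : E →L[ℂ] E) : adjoint (exp A) = exp (adjoint A) := by
  simpa only [star_eq_adjoint] using star_exp A

theorem adjoint_smul (c : ℂ) (A : E →L[ℂ] E) :
    adjoint (c • A) = starRingEnd ℂ c • adjoint A := by
  simpa only [star_eq_adjoint, Complex.star_def] using star_smul c A

theorem forall_inner_apply_map_apply_eq_iff (U J : E →L[ℂ] E) :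
    (∀ φ ψ, ⟪U φ, J (U ψ)⟫ = ⟪φ, J ψ⟫) ↔ adjoint U * J * U = J := by
  simp only [← adjoint_inner_right U, ContinuousLinearMap.ext_iff]
  exact ⟨fun h ψ => ext_inner_left ℂ fun φ => h φ ψ, fun h φ ψ => by rw [← h ψ]; rfl⟩

theorem comp_adjoint_comp_eq_iff_semiconjBy {J : E →L[ℂ] E} (hJ : ∀ x, J (J x) = x)
    (H : E →L[ℂ] E) : J ∘L adjoint H ∘L J = H ↔ SemiconjBy J H (adjoint H) := by
  have hJJ : J * J = 1 := ContinuousLinearMap.ext hJ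
  change J * (adjoint H * J) = H ↔ J * H = adjoint H * J
  refine ⟨fun h => ?_, fun h => by rw [← h, ← mul_assoc, hJJ, one_mul]⟩
  calc J * H = J * (J * (adjoint H * J)) := by rw [h]
    _ = adjoint H * J := by rw [← mul_assoc, hJJ, one_mul]

end ContinuousLinearMap

theorem stmt9_general {𝓚 : Type*} [NormedAddCommGroup 𝓚] [InnerProductSpace ℂ 𝓚] [CompleteSpace 𝓚]
    (J : 𝓚 →L[ℂ] 𝓚) (hJ2 : ∀ x, J (J x) = x)
    (H : 𝓚 →L[ℂ] 𝓚) :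
    (∀ t : ℝ, ∀ φ ψ : 𝓚,
        ⟪NormedSpace.exp (-(Complex.I * t) • H) φ,
          J (NormedSpace.exp (-(Complex.I * t) • H) ψ)⟫ = ⟪φ, J ψ⟫) ↔
    J ∘L adjoint H ∘L J = H := by
  rw [comp_adjoint_comp_eq_iff_semiconjBy hJ2,
    ← SemiconjBy.smul_right_iff₀ (neg_ne_zero.2 Complex.I_ne_zero),
    semiconjBy_iff_forall_exp_neg_smul_mul_mul_exp_smul_eq]
  refine forall_congr' fun t => ?_
  have hexp : -(Complex.I * t) • H = (t : ℂ) • -Complex.I • H := by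
    rw [smul_smul, mul_neg, mul_comm]
  rw [forall_inner_apply_map_apply_eq_iff, adjoint_exp, hexp, adjoint_smul, adjoint_smul]
  simp only [Complex.conj_ofReal, map_neg, Complex.conj_I, neg_neg, neg_smul, smul_neg]

/-- time evolution `U(t) = exp(-(i t) • H)` preserves the Krein inner product
`B(φ, ψ) = ⟪φ, J ψ⟫` for all times `t` iff the Hamiltonian `H` is `J`-Hermitian, i.e.
`H^♯ = J ∘ H† ∘ J = H`. -/
theorem stmt9 {𝓚 : Type*} [NormedAddCommGroup 𝓚] [InnerProductSpace ℂ 𝓚] [CompleteSpace 𝓚]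
    (J : 𝓚 →L[ℂ] 𝓚) (hJ2 : ∀ x, J (J x) = x)
    (hJsym : ∀ φ ψ : 𝓚, ⟪J φ, ψ⟫ = ⟪φ, J ψ⟫)
    (H : 𝓚 →L[ℂ] 𝓚) :
    (∀ t : ℝ, ∀ φ ψ : 𝓚,
        ⟪NormedSpace.exp (-(Complex.I * t) • H) φ,
          J (NormedSpace.exp (-(Complex.I * t) • H) ψ)⟫ = ⟪φ, J ψ⟫) ↔
    J ∘L adjoint H ∘L J = H :=
  stmt9_general J hJ2 H
end

section
/- Let 𝓚 be a complex Hilbert space and H : 𝓚 → 𝓚 a continuous linear operator, and for t ∈ ℝ let U(t) := exp(−(i t) • H) be the operator exponential. Then ⟪U(t) φ, U(t) ψ⟫ = ⟪φ, ψ⟫ for all t ∈ ℝ and all φ, ψ ∈ 𝓚 if and only if H is self-adjoint, i.e. H† = H. -/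
/-!
Inner-product preservation for all `t` says `star U(t) * U(t) = 1` with `U(t) = exp (t • A)` and
`A = -i H`. Differentiating this identity at `t = 0` gives `star A + A = 0`. Conversely, if `A` is
skew-adjoint then so is every `t • A`, and the exponential of a skew-adjoint element is unitary.
Finally, `-i H` is skew-adjoint exactly when `H` is self-adjoint.
-/

open InnerProductSpace ContinuousLinearMap NormedSpace

local notation "⟪" x ", " y "⟫" => @inner ℂ _ _ x y

section

variable {𝔸 : Type*} [NormedRing 𝔸] [NormedAlgebra ℝ 𝔸] [CompleteSpace 𝔸] [StarRing 𝔸]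
  [ContinuousStar 𝔸] [StarModule ℝ 𝔸]

theorem forall_star_exp_smul_mul_self_eq_one_iff (a : 𝔸) :
    (∀ t : ℝ, star (exp (t • a)) * exp (t • a) = 1) ↔ a ∈ skewAdjoint 𝔸 := by
  refine ⟨fun h => ?_, fun ha t => ?_⟩
  · have hderiv : HasDerivAt (fun t : ℝ => star (exp (t • a)) * exp (t • a)) (star a + a) 0 := by
      simp_rw [star_exp, star_smul, star_trivial]
      simpa using (hasDerivAt_exp_smul_const (star a) (0 : ℝ)).fun_mul
        (hasDerivAt_exp_smul_const a (0 : ℝ))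
    have hconst : HasDerivAt (fun t : ℝ => star (exp (t • a)) * exp (t • a)) 0 0 := by
      simpa only [h] using hasDerivAt_const (0 : ℝ) (1 : 𝔸)
    exact skewAdjoint.mem_iff.mpr (eq_neg_of_add_eq_zero_left (hderiv.unique hconst))
  · let +nondep : NormedAlgebra ℚ 𝔸 := .restrictScalars ℚ ℝ 𝔸
    exact Unitary.star_mul_self_of_mem <|
      exp_mem_unitary_of_mem_skewAdjoint (skewAdjoint.smul_mem t ha)

end

namespace ContinuousLinearMap

variable {E : Type*} [NormedAddCommGroup E] [InnerProductSpace ℂ E] [CompleteSpace E]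

theorem forall_inner_exp_smul_map_map_iff_mem_skewAdjoint (A : E →L[ℂ] E) :
    (∀ t : ℝ, ∀ x y : E, ⟪exp (t • A) x, exp (t • A) y⟫ = ⟪x, y⟫) ↔
      A ∈ skewAdjoint (E →L[ℂ] E) := by
  simp_rw [inner_map_map_iff_adjoint_comp_self, ← star_eq_adjoint]
  exact forall_star_exp_smul_mul_self_eq_one_iff A

end ContinuousLinearMap

/-- time evolution `U(t) = exp(-(i t) • H)` preserves the Hilbert-space inner
product for all times `t` iff the Hamiltonian `H` is self-adjoint, `H† = H`. -/
theorem stmt10 {𝓚 : Type*} [NormedAddCommGroup 𝓚] [InnerProductSpace ℂ 𝓚] [CompleteSpace 𝓚]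
    (H : 𝓚 →L[ℂ] 𝓚) :
    (∀ t : ℝ, ∀ φ ψ : 𝓚,
        ⟪NormedSpace.exp (-(Complex.I * t) • H) φ,
          NormedSpace.exp (-(Complex.I * t) • H) ψ⟫ = ⟪φ, ψ⟫) ↔
    adjoint H = H := by
  have hsmul (t : ℝ) : -(Complex.I * t) • H = t • -(Complex.I • H) := by
    rw [neg_smul, smul_neg, ← Complex.coe_smul, smul_smul, mul_comm]
  simp_rw [hsmul, forall_inner_exp_smul_map_map_iff_mem_skewAdjoint, neg_mem_iff,
    Complex.I_smul_mem_skewAdjoint_iff_isSelfAdjoint, isSelfAdjoint_iff']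
end

section
/- Let ℏ, m > 0 be real, V : ℝ → ℂ, and let ψ : ℝ × ℝ → ℂ (written ψ(x, t)) be twice continuously differentiable and satisfy the Schrödinger equation i ℏ ∂ψ/∂t(x, t) = −(ℏ²/(2m)) ∂²ψ/∂x²(x, t) + V(x) ψ(x, t) for all x, t. Define the probability density w(x, t) := conj(ψ(x, t)) · ψ(−x, t) and the particle current density j(x, t) := (i ℏ/(2m)) · (∂ₓ(conj ψ)(x, t) · ψ(−x, t) − conj(ψ(x, t)) · dₓ[x ↦ ψ(−x, t)](x)). Then for all x, t: ∂w/∂t(x, t) + ∂j/∂x(x, t) = (i/ℏ) · (conj(V(x)) − V(−x)) · w(x, t). In particular, the continuity equation ∂w/∂t + ∂j/∂x = 0 holds whenever V is PT-symmetric, i.e. conj(V(x)) = V(−x) for all x. -/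
/-!
Substituting the Schrödinger equation at `x` (conjugated) and at `-x` into
`∂ₜ w = conj ψₜ(x) ψ(-x) + conj ψ(x) ψₜ(-x)`, the kinetic terms give
`-(iℏ/2m) (conj ψₓₓ(x) ψ(-x) - conj ψ(x) ψₓₓ(-x))`. This is exactly `-∂ₓ j`, because `j` is
`iℏ/2m` times the Wronskian of `conj ψ` and `ψ(-·)`, whose derivative loses its first-order
terms. Only the potential terms `(i/ℏ) (conj (V x) - V (-x)) w` survive.
-/

open ComplexConjugate

theorem deriv_wronskian {𝕜 𝔸 : Type*} [NontriviallyNormedField 𝕜] [NormedRing 𝔸]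
    [NormedAlgebra 𝕜 𝔸] {g h : 𝕜 → 𝔸} {x : 𝕜} (hg : DifferentiableAt 𝕜 g x)
    (hh : DifferentiableAt 𝕜 h x) (hg' : DifferentiableAt 𝕜 (deriv g) x)
    (hh' : DifferentiableAt 𝕜 (deriv h) x) :
    deriv (fun y => deriv g y * h y - g y * deriv h y) x =
      deriv (deriv g) x * h x - g x * deriv (deriv h) x := by
  refine ((hg'.hasDerivAt.mul hh.hasDerivAt).sub (hg.hasDerivAt.mul hh'.hasDerivAt)).deriv.trans ?_
  abel

theorem deriv_wronskian_conj_comp_neg {f : ℝ → ℂ} (hf : ContDiff ℝ 2 f) (x : ℝ) :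
    deriv (fun y => (deriv fun y => conj (f y)) y * f (-y) -
        conj (f y) * (deriv fun y => f (-y)) y) x =
      conj (deriv (deriv f) x) * f (-x) - conj (f x) * deriv (deriv f) (-x) := by
  have hf1 : Differentiable ℝ f := hf.differentiable two_ne_zero
  have hf2 : Differentiable ℝ (deriv f) :=
    (hf.iterate_deriv' 1 1).differentiable one_ne_zero
  have hconj (g : ℝ → ℂ) : (deriv fun y => conj (g y)) = fun y => conj (deriv g y) :=
    deriv.star'
  have hneg : (deriv fun y => f (-y)) = fun y => -deriv f (-y) :=
    funext fun y => deriv_comp_neg f y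
  rw [deriv_wronskian (g := fun y => conj (f y)) (h := fun y => f (-y)) (hf1 x).star
    (hf1.comp differentiable_neg x), hconj, hneg, hconj, deriv.fun_neg, deriv_comp_neg, neg_neg]
  · rw [hconj]; exact (hf2 x).star
  · rw [hneg]; exact (hf2.comp differentiable_neg x).neg

theorem deriv_conj_mul {u v : ℝ → ℂ} {t : ℝ} (hu : DifferentiableAt ℝ u t)
    (hv : DifferentiableAt ℝ v t) :
    deriv (fun s => conj (u s) * v s) t = conj (deriv u t) * v t + conj (u t) * deriv v t :=
  (hu.hasDerivAt.star.mul hv.hasDerivAt).deriv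

theorem deriv_density_add_deriv_current (hbar m : ℝ) (hhbar : hbar ≠ 0) (V : ℝ → ℂ)
    (ψ : ℝ × ℝ → ℂ) (hψ : ContDiff ℝ 2 ψ)
    (hSchr : ∀ x t : ℝ,
      Complex.I * (hbar : ℂ) * deriv (fun s => ψ (x, s)) t =
        -((hbar : ℂ) ^ 2 / (2 * (m : ℂ))) * deriv (deriv fun y => ψ (y, t)) x +
          V x * ψ (x, t))
    (x t : ℝ) :
    deriv (fun s => conj (ψ (x, s)) * ψ (-x, s)) t +
      deriv (fun y => Complex.I * (hbar : ℂ) / (2 * (m : ℂ)) *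
        ((deriv fun y => conj (ψ (y, t))) y * ψ (-y, t) -
          conj (ψ (y, t)) * (deriv fun y => ψ (-y, t)) y)) x =
      Complex.I / (hbar : ℂ) * (conj (V x) - V (-x)) * (conj (ψ (x, t)) * ψ (-x, t)) := by
  have hψt (a : ℝ) : DifferentiableAt ℝ (fun s => ψ (a, s)) t :=
    (hψ.comp (contDiff_const.prodMk contDiff_id)).differentiable two_ne_zero t
  have hψx : ContDiff ℝ 2 fun y => ψ (y, t) := hψ.comp (contDiff_id.prodMk contDiff_const)
  rw [deriv_conj_mul (hψt x) (hψt (-x)), deriv_const_mul_field,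
    deriv_wronskian_conj_comp_neg hψx x]
  have hSchr_conj := congrArg conj (hSchr x t)
  have hSchr_neg := hSchr (-x) t
  simp only [map_mul, map_add, map_neg, map_div₀, map_pow, Complex.conj_I,
      Complex.conj_ofReal, map_ofNat] at hSchr_conj
  have hbarC : (hbar : ℂ) ≠ 0 := Complex.ofReal_ne_zero.mpr hhbar
  field_simp at hSchr_conj hSchr_neg ⊢
  linear_combination Complex.I * ψ (-x, t) * hSchr_conj - Complex.I * conj (ψ (x, t)) * hSchr_neg +
    2 * hbar * (conj (deriv (fun s => ψ (x, s)) t) * ψ (-x, t) +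
      conj (ψ (x, t)) * deriv (fun s => ψ (-x, s)) t) * Complex.I_sq

theorem stmt15_general (hbar m : ℝ) (hhbar : 0 < hbar)
    (V : ℝ → ℂ) (ψ : ℝ × ℝ → ℂ) (hψ : ContDiff ℝ 2 ψ)
    (hSchr : ∀ x t : ℝ,
      Complex.I * (hbar : ℂ) * deriv (fun s => ψ (x, s)) t =
        -((hbar : ℂ) ^ 2 / (2 * (m : ℂ))) * deriv (deriv fun y => ψ (y, t)) x +
          V x * ψ (x, t))
    (w j : ℝ → ℝ → ℂ)
    (hw : ∀ x t : ℝ, w x t = conj (ψ (x, t)) * ψ (-x, t))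
    (hj : ∀ x t : ℝ, j x t =
      Complex.I * (hbar : ℂ) / (2 * (m : ℂ)) *
        ((deriv fun y => conj (ψ (y, t))) x * ψ (-x, t) -
          conj (ψ (x, t)) * (deriv fun y => ψ (-y, t)) x)) :
    (∀ x t : ℝ,
      deriv (fun s => w x s) t + deriv (fun y => j y t) x =
        Complex.I / (hbar : ℂ) * (conj (V x) - V (-x)) * w x t) ∧
    ((∀ x : ℝ, conj (V x) = V (-x)) →
      ∀ x t : ℝ, deriv (fun s => w x s) t + deriv (fun y => j y t) x = 0) := by
  obtain rfl : w = fun x t => conj (ψ (x, t)) * ψ (-x, t) := funext₂ hw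
  obtain rfl : j = fun x t => Complex.I * (hbar : ℂ) / (2 * (m : ℂ)) *
      ((deriv fun y => conj (ψ (y, t))) x * ψ (-x, t) -
        conj (ψ (x, t)) * (deriv fun y => ψ (-y, t)) x) := funext₂ hj
  have balance := deriv_density_add_deriv_current hbar m hhbar.ne' V ψ hψ hSchr
  refine ⟨balance, fun hPT x t => ?_⟩
  rw [balance, hPT, sub_self, mul_zero, zero_mul]

/-- for a twice continuously differentiable solution `ψ(x, t)` of the
Schrödinger equation with potential `V`, the probability density
`w(x,t) = conj (ψ(x,t)) ψ(-x,t)` and the particle current density `j` satisfy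
`∂w/∂t + ∂j/∂x = (i/ℏ)(conj (V x) - V (-x)) w`; in particular the continuity equation
`∂w/∂t + ∂j/∂x = 0` holds whenever `V` is PT-symmetric. -/
theorem stmt15 (hbar m : ℝ) (hhbar : 0 < hbar) (hm : 0 < m)
    (V : ℝ → ℂ) (ψ : ℝ × ℝ → ℂ) (hψ : ContDiff ℝ 2 ψ)
    (hSchr : ∀ x t : ℝ,
      Complex.I * (hbar : ℂ) * deriv (fun s => ψ (x, s)) t =
        -((hbar : ℂ) ^ 2 / (2 * (m : ℂ))) * deriv (deriv fun y => ψ (y, t)) x +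
          V x * ψ (x, t))
    (w j : ℝ → ℝ → ℂ)
    (hw : ∀ x t : ℝ, w x t = conj (ψ (x, t)) * ψ (-x, t))
    (hj : ∀ x t : ℝ, j x t =
      Complex.I * (hbar : ℂ) / (2 * (m : ℂ)) *
        ((deriv fun y => conj (ψ (y, t))) x * ψ (-x, t) -
          conj (ψ (x, t)) * (deriv fun y => ψ (-y, t)) x)) :
    (∀ x t : ℝ,
      deriv (fun s => w x s) t + deriv (fun y => j y t) x =
        Complex.I / (hbar : ℂ) * (conj (V x) - V (-x)) * w x t) ∧
    ((∀ x : ℝ, conj (V x) = V (-x)) →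
      ∀ x t : ℝ, deriv (fun s => w x s) t + deriv (fun y => j y t) x = 0) :=
  stmt15_general hbar m hhbar V ψ hψ hSchr w j hw hj
end
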